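/- Let ξ be a nondegenerate real random variable with E[ξ] = 0 satisfying Cramér's condition [C₀]. Then there exists a constant C < ∞ (depending only on the law of ξ) such that for every N ≥ 1, every U ≥ 1, and every right-continuous function f of bounded variation on [0, ∞) with f(0) = 0 and J(f) ≤ N, one has |f(U)| ≤ C · √U · N. -/

import Mathlib

open MeasureTheory ProbabilityTheory Filter Set
open scoped ENNReal

/-- The deviation (Cramér / Legendre) function of a real random variable `ξ`:
`Λ(α) = sup { λ·α − log E[e^{λξ}] : λ ∈ ℝ, E[e^{λξ}] < ∞ }`, as a value in `[0, ∞]`. -/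
noncomputable def devFn {Ω : Type*} [MeasurableSpace Ω] (μ : Measure Ω) (ξ : Ω → ℝ)
    (α : ℝ) : ℝ≥0∞ :=
  ⨆ (l : ℝ) (_ : Integrable (fun ω => Real.exp (l * ξ ω)) μ),
    ENNReal.ofReal (l * α - Real.log (∫ ω, Real.exp (l * ξ ω) ∂μ))

/-- `λ₊ = sup{λ : ψ(λ) < ∞}`, viewed in `[0,∞]` (it is positive under `[C₀]`). -/
noncomputable def lamPlus {Ω : Type*} [MeasurableSpace Ω] (μ : Measure Ω) (ξ : Ω → ℝ) : ℝ≥0∞ :=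
  ⨆ (l : ℝ) (_ : Integrable (fun ω => Real.exp (l * ξ ω)) μ), ENNReal.ofReal l

/-- `|λ₋| = -inf{λ : ψ(λ) < ∞}`, viewed in `[0,∞]` (it is positive under `[C₀]`). -/
noncomputable def lamMinusAbs {Ω : Type*} [MeasurableSpace Ω] (μ : Measure Ω) (ξ : Ω → ℝ) :
    ℝ≥0∞ :=
  ⨆ (l : ℝ) (_ : Integrable (fun ω => Real.exp (l * ξ ω)) μ), ENNReal.ofReal (-l)

/-- The functional `J₀^U` evaluated on (the Lebesgue–Stieltjes signed measure `ν` of) a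
right-continuous function of bounded variation `f` with `f(0) = 0`, `f(t) = ν((0,t])`:
`J₀^U(f) = ∫₀^U Λ(f_a'(t)) dt + λ₊ · μ_s⁺((0,U]) + |λ₋| · μ_s⁻((0,U])`,
where `f_a'` is the Radon–Nikodym density of `ν` w.r.t. Lebesgue measure and
`μ_s⁺ − μ_s⁻` is the Jordan decomposition of the singular part of `ν`. -/
noncomputable def J0 {Ω : Type*} [MeasurableSpace Ω] (μ : Measure Ω) (ξ : Ω → ℝ)
    (ν : SignedMeasure ℝ) (U : ℝ) : ℝ≥0∞ :=
  (∫⁻ t in Set.Ioc (0 : ℝ) U, devFn μ ξ (ν.rnDeriv volume t)) +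
    lamPlus μ ξ * (ν.singularPart volume).toJordanDecomposition.posPart (Set.Ioc (0 : ℝ) U) +
    lamMinusAbs μ ξ * (ν.singularPart volume).toJordanDecomposition.negPart (Set.Ioc (0 : ℝ) U)

/-- A function `f` with `f(0) = 0` is right-continuous of locally bounded variation on `[0,∞)`
iff on every interval `[0,U]` it is represented as `f(t) = ν((0,t])` by some (finite)
Lebesgue–Stieltjes signed measure `ν`. -/
def IsLocBV (f : ℝ → ℝ) : Prop :=
  ∀ U : ℝ, 0 < U → ∃ ν : SignedMeasure ℝ, ∀ t ∈ Set.Icc (0 : ℝ) U, f t = ν (Set.Ioc (0 : ℝ) t)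

/-- The rate function `J(f) = sup_{U>0} J₀^U(f)`, where `J₀^U(f)` is computed through any
Lebesgue–Stieltjes signed measure representing `f` on `[0,U]`. -/
noncomputable def Jrate {Ω : Type*} [MeasurableSpace Ω] (μ : Measure Ω) (ξ : Ω → ℝ)
    (f : ℝ → ℝ) : ℝ≥0∞ :=
  ⨆ (U : ℝ) (_ : 0 < U),
    ⨅ (ν : SignedMeasure ℝ) (_ : ∀ t ∈ Set.Icc (0 : ℝ) U, f t = ν (Set.Ioc (0 : ℝ) t)),
      J0 μ ξ ν U

/-! Since `E ξ = 0` and `ξ` has exponential moments of order `δ`, a second-order Taylor bound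
gives `log ψ(s) ≤ M s²` for `|s| ≤ δ/2`, hence `Λ(α) ≥ s|α| - M s²` for `0 ≤ s ≤ δ/2`.
Integrating this over `(0, U]` with `s = (δ/2)/√U` bounds the absolutely continuous part of
`f(U)` by `O(√U N)`. The singular parts are charged at the rates `λ₊, |λ₋| ≥ δ` in `J`,
so they contribute at most `2N/δ`. -/

open Real

lemma exp_le_one_add_add_sq_mul_exp_abs (u : ℝ) : exp u ≤ 1 + u + u ^ 2 * exp |u| := by
  have h1 : 1 ≤ exp |u| := one_le_exp (abs_nonneg u)
  rcases le_or_gt |u| 1 with hu | hu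
  · nlinarith [(abs_le.mp (abs_exp_sub_one_sub_id_le hu)).2]
  rcases le_or_gt 0 u with h0 | h0
  · rw [abs_of_nonneg h0] at hu ⊢
    nlinarith [le_mul_of_one_le_left (exp_pos u).le (by nlinarith : (1 : ℝ) ≤ u ^ 2)]
  · rw [abs_of_neg h0] at hu
    nlinarith [exp_le_one_iff.mpr h0.le]

lemma sq_le_mul_exp_mul_abs {δ : ℝ} (hδ : 0 < δ) (x : ℝ) :
    x ^ 2 ≤ 8 / δ ^ 2 * exp (δ / 2 * |x|) := by
  have h := pow_div_factorial_le_exp _ (by positivity : 0 ≤ δ / 2 * |x|) 2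
  rw [mul_pow, sq_abs] at h
  rw [div_mul_eq_mul_div, le_div_iff₀ (by positivity)]
  norm_num at h
  linarith

lemma exp_mul_le_one_add_add_mul_sq {δ s : ℝ} (hδ : 0 < δ) (hs : |s| ≤ δ / 2) (x : ℝ) :
    exp (s * x) ≤ 1 + s * x + 8 / δ ^ 2 * s ^ 2 * exp (δ * |x|) := by
  have hsx : |s * x| ≤ δ / 2 * |x| := by
    rw [abs_mul]; exact mul_le_mul_of_nonneg_right hs (abs_nonneg x)
  calc exp (s * x) ≤ 1 + s * x + s ^ 2 * (x ^ 2 * exp (δ / 2 * |x|)) := by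
        have := exp_le_one_add_add_sq_mul_exp_abs (s * x)
        have : exp |s * x| ≤ exp (δ / 2 * |x|) := exp_le_exp.mpr hsx
        nlinarith [sq_nonneg (s * x)]
    _ ≤ 1 + s * x + s ^ 2 * (8 / δ ^ 2 * exp (δ / 2 * |x|) * exp (δ / 2 * |x|)) := by
        gcongr; exact sq_le_mul_exp_mul_abs hδ x
    _ = 1 + s * x + 8 / δ ^ 2 * s ^ 2 * exp (δ * |x|) := by
        rw [mul_assoc, ← exp_add]; ring_nf

section Cramer

variable {Ω : Type*} [MeasurableSpace Ω] {μ : Measure Ω} {ξ : Ω → ℝ} {δ : ℝ}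

lemma integrable_exp_mul_of_integrable_exp_mul_abs (hξ : AEMeasurable ξ μ)
    (hint : Integrable (fun ω => exp (δ * |ξ ω|)) μ) {s : ℝ} (hs : |s| ≤ δ) :
    Integrable (fun ω => exp (s * ξ ω)) μ := by
  refine hint.mono (measurable_exp.comp_aemeasurable (hξ.const_mul s)).aestronglyMeasurable
    (ae_of_all _ fun ω => ?_)
  simp only [norm_eq_abs, abs_exp, exp_le_exp]
  calc s * ξ ω ≤ |s| * |ξ ω| := (le_abs_self _).trans (abs_mul s (ξ ω)).le
    _ ≤ δ * |ξ ω| := by gcongr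

lemma integrable_of_integrable_exp_mul_abs (hξ : AEMeasurable ξ μ) (hδ : 0 < δ)
    (hint : Integrable (fun ω => exp (δ * |ξ ω|)) μ) : Integrable ξ μ := by
  refine integrable_of_mem_interior_integrableExpSet (mem_interior.mpr
    ⟨Ioo (-δ) δ, fun s hs => ?_, isOpen_Ioo, by simp [hδ]⟩)
  exact integrable_exp_mul_of_integrable_exp_mul_abs hξ hint (abs_lt.mpr hs).le

variable [IsProbabilityMeasure μ]

lemma mgf_le_one_add_mul_sq (hξ : AEMeasurable ξ μ) (hδ : 0 < δ)
    (hint : Integrable (fun ω => exp (δ * |ξ ω|)) μ) (hmean : ∫ ω, ξ ω ∂μ = 0) {s : ℝ}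
    (hs : |s| ≤ δ / 2) :
    mgf ξ μ s ≤ 1 + 8 / δ ^ 2 * (∫ ω, exp (δ * |ξ ω|) ∂μ) * s ^ 2 := by
  have hlin : Integrable (fun ω => 1 + s * ξ ω) μ :=
    (integrable_const 1).add ((integrable_of_integrable_exp_mul_abs hξ hδ hint).const_mul s)
  have hquad : Integrable (fun ω => 8 / δ ^ 2 * s ^ 2 * exp (δ * |ξ ω|)) μ := hint.const_mul _
  calc mgf ξ μ s ≤ ∫ ω, (1 + s * ξ ω + 8 / δ ^ 2 * s ^ 2 * exp (δ * |ξ ω|)) ∂μ :=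
        integral_mono (integrable_exp_mul_of_integrable_exp_mul_abs hξ hint (by linarith))
          (hlin.add hquad) fun ω => exp_mul_le_one_add_add_mul_sq hδ hs (ξ ω)
    _ = 1 + 8 / δ ^ 2 * (∫ ω, exp (δ * |ξ ω|) ∂μ) * s ^ 2 := by
        rw [integral_add hlin hquad, integral_add (integrable_const 1)
          ((integrable_of_integrable_exp_mul_abs hξ hδ hint).const_mul s), integral_const_mul,
          integral_const_mul, hmean]
        simp only [integral_const, probReal_univ, smul_eq_mul]
        ring

lemma ofReal_mul_abs_sub_le_devFn (hξ : AEMeasurable ξ μ) (hδ : 0 < δ)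
    (hint : Integrable (fun ω => exp (δ * |ξ ω|)) μ) (hmean : ∫ ω, ξ ω ∂μ = 0) {s : ℝ}
    (hs : s ∈ Icc 0 (δ / 2)) (α : ℝ) :
    ENNReal.ofReal (s * |α| - 8 / δ ^ 2 * (∫ ω, exp (δ * |ξ ω|) ∂μ) * s ^ 2) ≤ devFn μ ξ α := by
  obtain ⟨l, hl, hlα⟩ : ∃ l : ℝ, |l| = s ∧ l * α = s * |α| := by
    rcases le_total 0 α with h | h
    · exact ⟨s, abs_of_nonneg hs.1, by rw [abs_of_nonneg h]⟩
    · exact ⟨-s, by rw [abs_neg, abs_of_nonneg hs.1], by rw [abs_of_nonpos h]; ring⟩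
  have hint_l := integrable_exp_mul_of_integrable_exp_mul_abs hξ hint (hl.trans_le
    (by linarith [hs.2]) : |l| ≤ δ)
  have hmgf := mgf_le_one_add_mul_sq hξ hδ hint hmean (hl.trans_le hs.2)
  have hlog := log_le_sub_one_of_pos (mgf_pos hint_l)
  refine le_iSup₂_of_le l hint_l (ENNReal.ofReal_le_ofReal ?_)
  rw [← sq_abs l, hl] at hmgf
  change _ ≤ l * α - log (mgf ξ μ l)
  linarith

end Cramer

lemma MeasureTheory.SignedMeasure.abs_apply_le_singularPart_add_integral_rnDeriv {α : Type*}
    [MeasurableSpace α] (ν : SignedMeasure α) (μ : Measure α) [ν.HaveLebesgueDecomposition μ]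
    {A : Set α} (hA : MeasurableSet A) :
    |ν A| ≤ ((ν.singularPart μ).toJordanDecomposition.posPart A).toReal +
      ((ν.singularPart μ).toJordanDecomposition.negPart A).toReal +
      ∫ t in A, |ν.rnDeriv μ t| ∂μ := by
  set j := (ν.singularPart μ).toJordanDecomposition
  have hdec : ν A = ((j.posPart A).toReal - (j.negPart A).toReal) + ∫ t in A, ν.rnDeriv μ t ∂μ := by
    conv_lhs => rw [← ν.singularPart_add_withDensity_rnDeriv_eq μ,
      ← (ν.singularPart μ).toSignedMeasure_toJordanDecomposition]
    rw [IsAddApply.add_apply, withDensityᵥ_apply (ν.integrable_rnDeriv μ) hA,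
      JordanDecomposition.toSignedMeasure, Measure.toSignedMeasure_sub_apply hA]
    rfl
  have hint : |∫ t in A, ν.rnDeriv μ t ∂μ| ≤ ∫ t in A, |ν.rnDeriv μ t| ∂μ :=
    abs_integral_le_integral_abs
  rw [hdec]
  have := abs_sub ((j.posPart A).toReal) ((j.negPart A).toReal)
  simp only [abs_of_nonneg ENNReal.toReal_nonneg] at this
  linarith [abs_add_le ((j.posPart A).toReal - (j.negPart A).toReal) (∫ t in A, ν.rnDeriv μ t ∂μ)]

lemma ENNReal.toReal_le_div_of_mul_le {c m : ℝ≥0∞} {δ N : ℝ} (hδ : 0 < δ) (hN : 0 ≤ N)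
    (hc : ENNReal.ofReal δ ≤ c) (h : c * m ≤ ENNReal.ofReal N) : m.toReal ≤ N / δ := by
  have := ENNReal.toReal_le_of_le_ofReal hN ((mul_le_mul_left hc m).trans h)
  rw [ENNReal.toReal_mul, ENNReal.toReal_ofReal hδ.le] at this
  rw [le_div_iff₀ hδ]
  linarith

lemma mul_integral_abs_le_of_lintegral_le {α : Type*} [MeasurableSpace α] {μ : Measure α}
    [IsFiniteMeasure μ] {L : ℝ → ℝ≥0∞} {g : α → ℝ} {s c N : ℝ} (hs : 0 ≤ s) (hc : 0 ≤ c)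
    (hN : 0 ≤ N) (hL : ∀ x, ENNReal.ofReal (s * |x| - c) ≤ L x) (hg : AEStronglyMeasurable g μ)
    (h : ∫⁻ t, L (g t) ∂μ ≤ ENNReal.ofReal N) :
    s * ∫ t, |g t| ∂μ ≤ N + c * μ.real univ := by
  rw [← integral_const_mul, integral_eq_lintegral_of_nonneg_ae
    (ae_of_all _ fun t => by positivity) (by simpa only [norm_eq_abs] using hg.norm.const_mul s)]
  refine ENNReal.toReal_le_of_le_ofReal (by positivity) ?_
  calc ∫⁻ t, ENNReal.ofReal (s * |g t|) ∂μ ≤ ∫⁻ t, (L (g t) + ENNReal.ofReal c) ∂μ := by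
        refine lintegral_mono fun t => ?_
        calc ENNReal.ofReal (s * |g t|) = ENNReal.ofReal (s * |g t| - c + c) := by ring_nf
          _ ≤ ENNReal.ofReal (s * |g t| - c) + ENNReal.ofReal c := ENNReal.ofReal_add_le
          _ ≤ L (g t) + ENNReal.ofReal c := by gcongr; exact hL _
    _ = ∫⁻ t, L (g t) ∂μ + ENNReal.ofReal c * μ univ := by
        rw [lintegral_add_right _ measurable_const, lintegral_const]
    _ ≤ ENNReal.ofReal (N + c * μ.real univ) := by
        rw [ENNReal.ofReal_add hN (by positivity), ENNReal.ofReal_mul hc, ofReal_measureReal]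
        gcongr

section RateFunction

variable {Ω : Type*} [MeasurableSpace Ω] {μ : Measure Ω} {ξ : Ω → ℝ}

lemma exists_J0_lt_of_Jrate_lt {f : ℝ → ℝ} {U : ℝ} {c : ℝ≥0∞} (hU : 0 < U)
    (h : Jrate μ ξ f < c) :
    ∃ ν : SignedMeasure ℝ, (∀ t ∈ Icc (0 : ℝ) U, f t = ν (Ioc 0 t)) ∧ J0 μ ξ ν U < c := by
  have := (le_iSup₂ (f := fun U (_ : 0 < U) => ⨅ (ν : SignedMeasure ℝ)
    (_ : ∀ t ∈ Icc (0 : ℝ) U, f t = ν (Ioc 0 t)), J0 μ ξ ν U) U hU).trans_lt h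
  simpa only [iInf_lt_iff, exists_prop] using this

lemma abs_apply_Ioc_le_of_J0_le {M d δ N U : ℝ} (hM : 0 ≤ M) (hd : 0 < d) (hδ : 0 < δ)
    (hΛ : ∀ s ∈ Icc 0 d, ∀ α, ENNReal.ofReal (s * |α| - M * s ^ 2) ≤ devFn μ ξ α)
    (hlamPlus : ENNReal.ofReal δ ≤ lamPlus μ ξ) (hlamMinus : ENNReal.ofReal δ ≤ lamMinusAbs μ ξ)
    (hN : 1 ≤ N) (hU : 1 ≤ U) (ν : SignedMeasure ℝ) (hJ : J0 μ ξ ν U ≤ ENNReal.ofReal N) :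
    |ν (Ioc 0 U)| ≤ (2 / δ + 1 / d + M * d) * √U * N := by
  have hsU : 1 ≤ √U := one_le_sqrt.mpr hU
  set s := d / √U
  have hs : s ∈ Icc 0 d := ⟨by positivity, div_le_self hd.le hsU⟩
  have hpos : ((ν.singularPart volume).toJordanDecomposition.posPart (Ioc 0 U)).toReal ≤ N / δ :=
    ENNReal.toReal_le_div_of_mul_le hδ (by linarith) hlamPlus ((le_add_self.trans le_self_add).trans hJ)
  have hneg : ((ν.singularPart volume).toJordanDecomposition.negPart (Ioc 0 U)).toReal ≤ N / δ :=
    ENNReal.toReal_le_div_of_mul_le hδ (by linarith) hlamMinus (le_add_self.trans hJ)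
  have hac : s * ∫ t in Ioc 0 U, |ν.rnDeriv volume t| ≤ N + M * s ^ 2 * U := by
    simpa only [measureReal_restrict_apply_univ, Real.volume_real_Ioc_of_le (by linarith : 0 ≤ U),
      sub_zero] using
      mul_integral_abs_le_of_lintegral_le hs.1 (by positivity) (by linarith) (hΛ s hs)
        (ν.integrable_rnDeriv volume).aestronglyMeasurable.restrict
        ((le_self_add.trans le_self_add).trans hJ)
  have hac' : ∫ t in Ioc 0 U, |ν.rnDeriv volume t| ≤ (1 / d + M * d) * √U * N := by
    refine le_of_mul_le_mul_left (hac.trans ?_) (by positivity : 0 < s)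
    have hsU' : s * √U = d := div_mul_cancel₀ d (by positivity)
    have hs2 : s ^ 2 * U = d ^ 2 := by
      rw [← hsU', mul_pow, sq_sqrt (by linarith : 0 ≤ U)]
    calc N + M * s ^ 2 * U = N + M * d ^ 2 := by rw [mul_assoc, hs2]
      _ ≤ (1 + M * d ^ 2) * N := by nlinarith [mul_nonneg hM (sq_nonneg d)]
      _ = s * ((1 / d + M * d) * √U * N) := by
        rw [show s * ((1 / d + M * d) * √U * N) = (1 / d + M * d) * (s * √U) * N by ring, hsU']
        field_simp
  calc |ν (Ioc 0 U)| ≤ N / δ + N / δ + (1 / d + M * d) * √U * N := by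
        linarith [ν.abs_apply_le_singularPart_add_integral_rnDeriv volume
          (measurableSet_Ioc (a := (0 : ℝ)) (b := U))]
    _ ≤ (2 / δ + 1 / d + M * d) * √U * N := by
        have : N / δ ≤ 1 / δ * √U * N := by
          rw [one_div_mul_eq_div, div_mul_eq_mul_div, mul_comm]; gcongr; nlinarith
        linarith [show (2 / δ + 1 / d + M * d) * √U * N
          = 2 * (1 / δ * √U * N) + (1 / d + M * d) * √U * N by ring]

end RateFunction

theorem abs_le_of_Jrate_le_general {Ω : Type*} [MeasurableSpace Ω] (μ : Measure Ω)
    [IsProbabilityMeasure μ] (ξ : Ω → ℝ) (hmeas : Measurable ξ)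
    (hC0 : ∃ δ > 0, Integrable (fun ω => Real.exp (δ * |ξ ω|)) μ)
    (hmean : ∫ ω, ξ ω ∂μ = 0) :
    ∃ C : ℝ, ∀ N : ℝ, 1 ≤ N → ∀ U : ℝ, 1 ≤ U → ∀ f : ℝ → ℝ, IsLocBV f →
      Jrate μ ξ f ≤ ENNReal.ofReal N → |f U| ≤ C * Real.sqrt U * N := by
  obtain ⟨δ, hδ, hint⟩ := hC0
  set M := 8 / δ ^ 2 * ∫ ω, exp (δ * |ξ ω|) ∂μ
  have hM : 0 ≤ M := mul_nonneg (by positivity) (integral_nonneg fun ω => (exp_pos _).le)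
  have hδ' : |δ| ≤ δ := (abs_of_pos hδ).le
  refine ⟨2 / δ + 1 / (δ / 2) + M * (δ / 2), fun N hN U hU f _ hJ => ?_⟩
  have hbound : ∀ N' ∈ Ioi N, |f U| ≤ (2 / δ + 1 / (δ / 2) + M * (δ / 2)) * √U * N' := by
    intro N' hN'
    obtain ⟨ν, hrep, hν⟩ := exists_J0_lt_of_Jrate_lt (by linarith)
      (hJ.trans_lt ((ENNReal.ofReal_lt_ofReal_iff (by linarith [mem_Ioi.mp hN'])).mpr hN'))
    rw [hrep U ⟨by linarith, le_rfl⟩]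
    exact abs_apply_Ioc_le_of_J0_le hM (by positivity) hδ
      (fun s hs => ofReal_mul_abs_sub_le_devFn hmeas.aemeasurable hδ hint hmean hs)
      (le_iSup₂_of_le δ (integrable_exp_mul_of_integrable_exp_mul_abs hmeas.aemeasurable hint hδ')
        le_rfl)
      (le_iSup₂_of_le (-δ) (integrable_exp_mul_of_integrable_exp_mul_abs hmeas.aemeasurable hint
        (by rwa [abs_neg])) (by rw [neg_neg]))
      (by linarith [mem_Ioi.mp hN']) hU ν hν.le
  exact ge_of_tendsto ((continuous_const.mul continuous_id).tendsto' N _ rfl |>.mono_left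
    nhdsWithin_le_nhds) (eventually_nhdsWithin_of_forall hbound)

/-- if `ξ` is nondegenerate, centered and satisfies Cramér's condition `[C₀]`,
then there is a constant `C` (depending only on the law of `ξ`) such that for all `N ≥ 1`,
`U ≥ 1` and every right-continuous `f` of locally bounded variation with `f(0) = 0` and
`J(f) ≤ N`, one has `|f(U)| ≤ C·√U·N`. -/
theorem abs_le_of_Jrate_le {Ω : Type*} [MeasurableSpace Ω] (μ : Measure Ω)
    [IsProbabilityMeasure μ] (ξ : Ω → ℝ) (hmeas : Measurable ξ)
    (hnondeg : ¬ ∃ c : ℝ, ξ =ᵐ[μ] fun _ => c)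
    (hC0 : ∃ δ > 0, Integrable (fun ω => Real.exp (δ * |ξ ω|)) μ)
    (hmean : ∫ ω, ξ ω ∂μ = 0) :
    ∃ C : ℝ, ∀ N : ℝ, 1 ≤ N → ∀ U : ℝ, 1 ≤ U → ∀ f : ℝ → ℝ, IsLocBV f →
      Jrate μ ξ f ≤ ENNReal.ofReal N → |f U| ≤ C * Real.sqrt U * N :=
  abs_le_of_Jrate_le_general μ ξ hmeas hC0 hmean
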